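/- arXiv:2406.06418 — 6 statements merged into one kernel-verified Lean document; each statement's English description precedes it below -/
import Mathlib

section
/- For every integer d ≥ 1 and every unit vector ψ ∈ ℂ^d, the 1-norm lower bound Σ_{l=0}^{d−1} Σ_{m=0}^{d−1} |⟨ψ, O_{l,m} ψ⟩| ≥ d holds; equivalently, the magic measure ‖x_ψ‖₁ = Σ_{l,m∈{0,…,d−1}} |d^{−1}⟨ψ, O_{l,m} ψ⟩| is at least 1 for every pure state. -/
open Complex Matrix Finset

/-! Up to a phase, `⟨ψ, O_{l,m} ψ⟩` is the `m`-th discrete Fourier coefficient of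
`x ↦ conj ψ(l - x) ψ(x)`. Each such coefficient has modulus at most
`Σ_x |ψ(l - x)| |ψ(x)| ≤ ‖ψ‖² = 1`, while Parseval in `m` followed by the sum over `l` gives
`Σ_{l,m} |⟨ψ, O_{l,m} ψ⟩|² = d ‖ψ‖⁴ = d`. As `|c|² ≤ |c|` for `|c| ≤ 1`, the bound follows. -/

/-- The operator `O_{l,m}`: the `d × d` complex matrix whose `(u, x)` entry is
`e^{-iπml/d} · ω_d^{m x}` if `u ≡ l - x (mod d)`, and `0` otherwise,
where `ω_d = exp(2πi/d)`. -/
noncomputable def Omat (d : ℕ) (l m : ℤ) : Matrix (Fin d) (Fin d) ℂ :=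
  Matrix.of fun u x =>
    if (d : ℤ) ∣ (((u : ℕ) : ℤ) + ((x : ℕ) : ℤ) - l) then
      Complex.exp (-((Real.pi : ℂ) * Complex.I * m * l) / d) *
        Complex.exp (2 * (Real.pi : ℂ) * Complex.I * m * ((x : ℕ) : ℂ) / d)
    else 0

lemma Fin.dvd_val_sub_val_iff {d : ℕ} (x y : Fin d) :
    (d : ℤ) ∣ ((x : ℕ) : ℤ) - ((y : ℕ) : ℤ) ↔ x = y := by
  refine ⟨fun h => ?_, fun h => by simp [h]⟩
  have := Int.eq_zero_of_abs_lt_dvd h (abs_lt.2 ⟨by omega, by omega⟩)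
  omega

lemma sum_mul_comp_perm_le_sum_sq {ι : Type*} [Fintype ι] (σ : Equiv.Perm ι) (f : ι → ℝ) :
    ∑ x, f (σ x) * f x ≤ ∑ x, f x ^ 2 := by
  have := sum_le_sum fun x (_ : x ∈ univ) => two_mul_le_add_sq (f (σ x)) (f x)
  rw [sum_add_distrib, Equiv.sum_comp σ (fun x => f x ^ 2)] at this
  simp only [mul_assoc, ← mul_sum] at this
  linarith

lemma sum_sum_norm_star_sub_mul_sq {G : Type*} [AddGroup G] [Fintype G] (ψ : G → ℂ) :
    ∑ l, ∑ x, ‖star (ψ (l - x)) * ψ x‖ ^ 2 = (∑ x, ‖ψ x‖ ^ 2) ^ 2 := by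
  rw [sum_comm, sq, sum_mul]
  refine sum_congr rfl fun x _ => ?_
  simp only [norm_mul, norm_star, mul_pow, ← sum_mul]
  rw [mul_comm]
  congr 1
  exact (Equiv.subRight x).sum_comp (fun u => ‖ψ u‖ ^ 2)

lemma norm_sum_mul_star_sub_mul_le {G : Type*} [AddGroup G] [Fintype G] (w : G → ℂ)
    (hw : ∀ x, ‖w x‖ ≤ 1) (ψ : G → ℂ) (l : G) :
    ‖∑ x, w x * (star (ψ (l - x)) * ψ x)‖ ≤ ∑ x, ‖ψ x‖ ^ 2 :=
  calc _ ≤ ∑ x, ‖ψ (Equiv.subLeft l x)‖ * ‖ψ x‖ := by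
        refine (norm_sum_le _ _).trans (sum_le_sum fun x _ => ?_)
        rw [norm_mul, norm_mul, norm_star]
        exact mul_le_of_le_one_left (by positivity) (hw x)
    _ ≤ _ := sum_mul_comp_perm_le_sum_sq (Equiv.subLeft l) (‖ψ ·‖)

section

variable {d : ℕ} [NeZero d]

lemma Fin.dvd_val_add_val_sub_val_iff (l u x : Fin d) :
    (d : ℤ) ∣ ((u : ℕ) : ℤ) + ((x : ℕ) : ℤ) - ((l : ℕ) : ℤ) ↔ u = l - x := by
  rw [eq_sub_iff_add_eq, Fin.ext_iff, Fin.val_add]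
  conv_rhs => rw [← Nat.mod_eq_of_lt l.isLt]
  rw [← Nat.ModEq, Nat.modEq_iff_dvd, ← dvd_neg]
  push_cast
  ring_nf

lemma sum_range_exp_mul_conj_exp (x y : Fin d) :
    ∑ m ∈ range d, exp (2 * Real.pi * I * m * (x : ℕ) / d) *
        starRingEnd ℂ (exp (2 * Real.pi * I * m * (y : ℕ) / d)) = if x = y then (d : ℂ) else 0 := by
  have hζ := Complex.isPrimitiveRoot_exp d (NeZero.ne d)
  have hterm (m : ℕ) : exp (2 * Real.pi * I * m * (x : ℕ) / d) *
      starRingEnd ℂ (exp (2 * Real.pi * I * m * (y : ℕ) / d)) =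
        (exp (2 * Real.pi * I / d) ^ (((x : ℕ) : ℤ) - ((y : ℕ) : ℤ))) ^ m := by
    rw [← exp_conj, ← exp_add, ← exp_int_mul, ← exp_nat_mul]
    congr 1
    simp [conj_ofReal, map_ofNat]
    ring
  simp only [hterm]
  split_ifs with hxy
  · simp [hxy]
  · generalize hk : ((x : ℕ) : ℤ) - ((y : ℕ) : ℤ) = k
    have hr : exp (2 * Real.pi * I / d) ^ k ≠ 1 := by
      rwa [ne_eq, hζ.zpow_eq_one_iff_dvd, ← hk, Fin.dvd_val_sub_val_iff]
    have hrd : (exp (2 * Real.pi * I / d) ^ k) ^ d = 1 := by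
      rw [← zpow_natCast, ← _root_.zpow_mul, mul_comm k, _root_.zpow_mul, zpow_natCast,
        hζ.pow_eq_one, _root_.one_zpow]
    have := geom_sum_mul (exp (2 * Real.pi * I / d) ^ k) d
    rw [hrd, sub_self, mul_eq_zero] at this
    exact this.resolve_right (sub_ne_zero.2 hr)

lemma sum_range_norm_sq_dft (a : Fin d → ℂ) :
    ∑ m ∈ range d, ‖∑ x : Fin d, exp (2 * Real.pi * I * m * (x : ℕ) / d) * a x‖ ^ 2 =
      d * ∑ x, ‖a x‖ ^ 2 := by
  have key : ∑ m ∈ range d,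
      ((‖∑ x : Fin d, exp (2 * Real.pi * I * m * (x : ℕ) / d) * a x‖ ^ 2 : ℝ) : ℂ) =
        d * ∑ x, ((‖a x‖ ^ 2 : ℝ) : ℂ) := by
    simp only [Complex.sq_norm, ← mul_conj, map_sum, map_mul, sum_mul_sum]
    rw [sum_comm, mul_sum]
    refine sum_congr rfl fun x _ => ?_
    rw [sum_comm]
    simp_rw [mul_mul_mul_comm _ (a x), ← sum_mul, sum_range_exp_mul_conj_exp, ite_mul, zero_mul]
    simp
  exact_mod_cast key

lemma inner_Omat_mulVec (ψ : Fin d → ℂ) (l : Fin d) (m : ℕ) :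
    ∑ u, star (ψ u) * (Omat d (l : ℕ) m).mulVec ψ u =
      exp (-(Real.pi * I * m * (l : ℕ)) / d) *
        ∑ x : Fin d, exp (2 * Real.pi * I * m * (x : ℕ) / d) * (star (ψ (l - x)) * ψ x) := by
  simp only [mulVec, dotProduct, Omat, of_apply, mul_sum, Fin.dvd_val_add_val_sub_val_iff]
  rw [sum_comm]
  refine sum_congr rfl fun x _ => ?_
  simp only [ite_mul, mul_ite, mul_zero, zero_mul, sum_ite_eq', mem_univ, if_true]
  push_cast
  ring

lemma norm_inner_Omat_mulVec (ψ : Fin d → ℂ) (l : Fin d) (m : ℕ) :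
    ‖∑ u, star (ψ u) * (Omat d (l : ℕ) m).mulVec ψ u‖ =
      ‖∑ x : Fin d, exp (2 * Real.pi * I * m * (x : ℕ) / d) * (star (ψ (l - x)) * ψ x)‖ := by
  rw [inner_Omat_mulVec, norm_mul]
  simp [norm_exp]

end

/-- for every unit vector `ψ ∈ ℂ^d`,
`Σ_{l,m=0}^{d-1} |⟨ψ, O_{l,m} ψ⟩| ≥ d`; equivalently
`‖x_ψ‖₁ = Σ_{l,m} |d⁻¹ ⟨ψ, O_{l,m} ψ⟩| ≥ 1` for every pure state. -/
theorem Omat_one_norm_ge (d : ℕ) (hd : 1 ≤ d) (ψ : Fin d → ℂ)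
    (hψ : ∑ i, ‖ψ i‖ ^ 2 = 1) :
    (d : ℝ) ≤ ∑ l ∈ Finset.range d, ∑ m ∈ Finset.range d,
      ‖∑ u, star (ψ u) * (Omat d l m).mulVec ψ u‖ := by
  have : NeZero d := ⟨by omega⟩
  set c : Fin d → ℕ → ℂ := fun l m =>
    ∑ x : Fin d, exp (2 * Real.pi * I * m * (x : ℕ) / d) * (star (ψ (l - x)) * ψ x)
  have hc_le (l : Fin d) (m : ℕ) : ‖c l m‖ ≤ 1 :=
    hψ ▸ norm_sum_mul_star_sub_mul_le _ (fun x => by simp [norm_exp]) ψ l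
  have hc_sq : ∑ l, ∑ m ∈ range d, ‖c l m‖ ^ 2 = d := by
    simp only [c, sum_range_norm_sq_dft, ← mul_sum, sum_sum_norm_star_sub_mul_sq, hψ]
    simp
  rw [← Fin.sum_univ_eq_sum_range]
  calc (d : ℝ) = ∑ l, ∑ m ∈ range d, ‖c l m‖ ^ 2 := hc_sq.symm
    _ ≤ ∑ l, ∑ m ∈ range d, ‖c l m‖ := by
      gcongr with l _ m _
      exact pow_le_of_le_one (norm_nonneg _) (hc_le l m) two_ne_zero
    _ = _ := by simp only [c, norm_inner_Omat_mulVec]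
end

section
/- For every integer d ≥ 1 and all integers l, m, l′, m′, conjugation by the SUM gate acts on the two-qudit operator basis as a symplectic linear map on the coordinates: SUM · (O_{l,m} ⊗ O_{l′,m′}) · SUM† = O_{l, m−m′} ⊗ O_{l+l′, m′}, where ⊗ denotes the Kronecker product. -/
/-!
SUM is the permutation matrix of `(i, j) ↦ (i, j - i)`, so conjugating by it only reindexes:
the `(u, x)` entry of the left side is `O_{l,m}(u₁, x₁) · O_{l',m'}(u₂ - u₁, x₂ - x₁)`.
Since `ω_d^{m x}` is `d`-periodic in `x`, the entries of `O_{l,m}` make sense for integer indices,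
and there the identity holds entrywise: given `u₁ + x₁ ≡ l`, the support condition
`(u₂ - u₁) + (x₂ - x₁) ≡ l'` is equivalent to `u₂ + x₂ ≡ l + l'`, and the phases agree exactly.
-/

open Complex Matrix Finset

open Kronecker

/-- The SUM gate `Σ_{i,j} |i⟩⟨i| ⊗ |(i+j) mod d⟩⟨j|` as a `d² × d²` matrix. -/
noncomputable def SUMmat (d : ℕ) : Matrix (Fin d × Fin d) (Fin d × Fin d) ℂ :=
  Matrix.of fun u x =>
    if u.1 = x.1 ∧ (d : ℤ) ∣ (((u.2 : ℕ) : ℤ) - ((x.2 : ℕ) : ℤ) - ((x.1 : ℕ) : ℤ)) then 1 else 0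

namespace Matrix

variable {n R : Type*} [Fintype n] [DecidableEq n] [NonAssocSemiring R] [StarRing R]

theorem permMatrix_mul_mul_conjTranspose_permMatrix (σ : Equiv.Perm n) (M : Matrix n n R) :
    σ.permMatrix R * M * (σ.permMatrix R)ᴴ = M.submatrix σ σ := by
  rw [conjTranspose_permMatrix, PEquiv.toMatrix_toPEquiv_mul, PEquiv.mul_toMatrix_toPEquiv,
    submatrix_submatrix]
  rfl

end Matrix

theorem Fin.sub_eq_iff_intCast_dvd {d : ℕ} (a b c : Fin d) :
    a - b = c ↔ (d : ℤ) ∣ (a : ℤ) - b - c := by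
  rw [Fin.ext_iff, ← Int.natCast_inj, Fin.coe_int_sub_eq_mod, ← Int.modEq_iff_dvd,
    Int.ModEq, Int.emod_eq_of_lt (a := c) (by omega) (by omega), eq_comm]

theorem Fin.intCast_val_sub_modEq {d : ℕ} (a b : Fin d) :
    ((a - b : Fin d) : ℤ) ≡ (a : ℤ) - b [ZMOD d] := by
  rw [Fin.coe_int_sub_eq_mod]
  exact Int.mod_modEq _ _

def sumGatePerm (d : ℕ) [NeZero d] : Equiv.Perm (Fin d × Fin d) :=
  Equiv.prodShear (Equiv.refl _) Equiv.subRight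

theorem sumGatePerm_apply {d : ℕ} [NeZero d] (u : Fin d × Fin d) :
    sumGatePerm d u = (u.1, u.2 - u.1) :=
  rfl

theorem SUMmat_eq_permMatrix (d : ℕ) [NeZero d] : SUMmat d = (sumGatePerm d).permMatrix ℂ := by
  ext u x
  simp only [SUMmat, of_apply, PEquiv.toMatrix_apply, Equiv.toPEquiv_apply, Option.mem_def,
    Option.some_inj, sumGatePerm_apply, Prod.ext_iff, Fin.sub_eq_iff_intCast_dvd]
  refine if_congr (and_congr_right fun h => ?_) rfl rfl
  rw [h, sub_right_comm]

noncomputable def omatEntry (d : ℕ) (l m u x : ℤ) : ℂ :=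
  if l ≡ u + x [ZMOD d] then exp (Real.pi * I * (2 * m * x - m * l) / d) else 0

theorem Omat_apply (d : ℕ) (l m : ℤ) (u x : Fin d) : Omat d l m u x = omatEntry d l m u x := by
  simp only [Omat, omatEntry, of_apply, Int.modEq_iff_dvd, ← exp_add]
  congr 2
  push_cast
  ring

theorem omatEntry_congr {d : ℕ} [NeZero d] (l m : ℤ) {u u' x x' : ℤ} (hu : u ≡ u' [ZMOD d])
    (hx : x ≡ x' [ZMOD d]) : omatEntry d l m u x = omatEntry d l m u' x' := by
  obtain ⟨k, hk⟩ := hx.dvd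
  have hd : (d : ℂ) ≠ 0 := NeZero.ne _
  have hphase : exp (Real.pi * I * (2 * m * x - m * l) / d) =
      exp (Real.pi * I * (2 * m * x' - m * l) / d) := by
    rw [exp_eq_exp_iff_exists_int]
    refine ⟨-(m * k), ?_⟩
    rw [show (x' : ℂ) = x + d * k by exact_mod_cast (by linarith : x' = x + d * k)]
    field_simp
    push_cast
    ring
  have hsupp : l ≡ u + x [ZMOD d] ↔ l ≡ u' + x' [ZMOD d] :=
    ⟨(·.trans (hu.add hx)), (·.trans (hu.add hx).symm)⟩
  simp only [omatEntry, hphase, hsupp]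

theorem omatEntry_mul_omatEntry_sub (d : ℕ) (l m l' m' u₁ x₁ u₂ x₂ : ℤ) :
    omatEntry d l m u₁ x₁ * omatEntry d l' m' (u₂ - u₁) (x₂ - x₁) =
      omatEntry d l (m - m') u₁ x₁ * omatEntry d (l + l') m' u₂ x₂ := by
  by_cases h : l ≡ u₁ + x₁ [ZMOD d]
  · have hsupp : l' ≡ u₂ - u₁ + (x₂ - x₁) [ZMOD d] ↔ l + l' ≡ u₂ + x₂ [ZMOD d] := by
      rw [Int.modEq_iff_dvd] at h
      rw [Int.modEq_iff_dvd, Int.modEq_iff_dvd, ← dvd_add_right h]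
      ring_nf
    simp only [omatEntry, if_pos h, hsupp]
    split_ifs
    · rw [← exp_add, ← exp_add]
      congr 1
      push_cast
      ring
    · simp
  · simp [omatEntry, h]

/-- conjugation by the SUM gate acts on the two-qudit operator basis as
a symplectic linear map: `SUM · (O_{l,m} ⊗ O_{l',m'}) · SUM† = O_{l,m-m'} ⊗ O_{l+l',m'}`. -/
theorem Omat_SUM_conj (d : ℕ) (hd : 1 ≤ d) (l m l' m' : ℤ) :
    SUMmat d * (Omat d l m ⊗ₖ Omat d l' m') * (SUMmat d)ᴴ =
      Omat d l (m - m') ⊗ₖ Omat d (l + l') m' := by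
  have : NeZero d := ⟨by omega⟩
  rw [SUMmat_eq_permMatrix, permMatrix_mul_mul_conjTranspose_permMatrix]
  ext ⟨u₁, u₂⟩ ⟨x₁, x₂⟩
  simp only [submatrix_apply, kroneckerMap_apply, sumGatePerm_apply, Omat_apply]
  rw [omatEntry_congr l' m' (Fin.intCast_val_sub_modEq u₂ u₁) (Fin.intCast_val_sub_modEq x₂ x₁)]
  exact omatEntry_mul_omatEntry_sub ..
end

section
/- Let d ≥ 2 be even and let P be the diagonal d×d phase-gate matrix with entries P|j⟩ = e^{iπj²/d}|j⟩ for j ∈ {0, …, d−1}. Then for all integers l, m, conjugation by P acts on the operator basis as P · O_{l,m} · P† = O_{l, m−l}. -/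
open Complex Matrix Finset

/-
Conjugating by the diagonal matrix `P` multiplies the `(u, x)` entry of `O_{l,m}` by
`e^{iπ(u² - x²)/d}`. On the support `u ≡ l - x (mod d)`, and because `d` is even, the quadratic
phase `j ↦ e^{iπj²/d}` is `d`-periodic, so `u²` may be replaced by `(l - x)² = x² + l² - 2lx`.
The factor `e^{iπ(l² - 2lx)/d}` is exactly what turns the prefactors of `O_{l,m}` into those of
`O_{l,m-l}`.
-/

noncomputable def quadPhase (d : ℕ) (j : ℤ) : ℂ :=
  exp (Real.pi * I * (j : ℂ) ^ 2 / d)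

theorem quadPhase_add_mul {d : ℕ} (hd : Even d) (j k : ℤ) :
    quadPhase d (j + d * k) = quadPhase d j := by
  rcases Nat.eq_zero_or_pos d with rfl | hpos
  · simp
  obtain ⟨e, rfl⟩ := hd
  have he0 : (e : ℂ) ≠ 0 := by exact_mod_cast (show e ≠ 0 by omega)
  rw [quadPhase, quadPhase, exp_eq_exp_iff_exists_int]
  exact ⟨j * k + e * k ^ 2, by push_cast; field_simp; ring⟩

theorem quadPhase_sub_mul_star (d : ℕ) (l x : ℤ) :
    quadPhase d (l - x) * star (quadPhase d x) =
      exp (Real.pi * I * (l : ℂ) ^ 2 / d) * exp (-(2 * Real.pi * I * l * x / d)) := by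
  rw [quadPhase, quadPhase, star_def, ← exp_conj, ← exp_add, ← exp_add]
  congr 1
  simp only [map_div₀, map_mul, map_pow, conj_ofReal, conj_I, map_intCast, map_natCast]
  push_cast
  ring

theorem diagonal_mul_mul_conjTranspose_apply {n α : Type*} [Fintype n] [DecidableEq n]
    [NonUnitalNonAssocSemiring α] [StarRing α] (v : n → α) (A : Matrix n n α) (u x : n) :
    (diagonal v * A * (diagonal v)ᴴ) u x = v u * A u x * star (v x) := by
  rw [diagonal_conjTranspose, mul_diagonal, diagonal_mul]
  rfl

theorem Omat_phase_conj_even_general (d : ℕ) (hde : Even d) (l m : ℤ)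
    (P : Matrix (Fin d) (Fin d) ℂ)
    (hP : P = Matrix.of fun (u x : Fin d) =>
      if u = x then Complex.exp ((Real.pi : ℂ) * Complex.I * ((u : ℕ) : ℂ) ^ 2 / d) else 0) :
    P * Omat d l m * Pᴴ = Omat d l (m - l) := by
  have hP_diag : P = diagonal fun u : Fin d => quadPhase d (u : ℕ) := by
    rw [hP]
    ext u x
    simp [quadPhase, diagonal_apply]
  ext u x
  rw [hP_diag, diagonal_mul_mul_conjTranspose_apply]
  simp only [Omat, of_apply]
  split_ifs with h
  · obtain ⟨k, hk⟩ := h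
    have hu : ((u : ℕ) : ℤ) = l - (x : ℕ) + d * k := by omega
    rw [hu, quadPhase_add_mul hde, mul_comm (quadPhase _ _), mul_assoc,
      quadPhase_sub_mul_star, ← exp_add, ← exp_add, ← exp_add, ← exp_add]
    congr 1
    push_cast
    ring
  · simp

/-- for even `d ≥ 2`, conjugation by the phase gate
`P|j⟩ = e^{iπj²/d}|j⟩` acts as `P · O_{l,m} · P† = O_{l, m-l}`. -/
theorem Omat_phase_conj_even (d : ℕ) (hd : 2 ≤ d) (hde : Even d) (l m : ℤ)
    (P : Matrix (Fin d) (Fin d) ℂ)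
    (hP : P = Matrix.of fun (u x : Fin d) =>
      if u = x then Complex.exp ((Real.pi : ℂ) * Complex.I * ((u : ℕ) : ℂ) ^ 2 / d) else 0) :
    P * Omat d l m * Pᴴ = Omat d l (m - l) :=
  Omat_phase_conj_even_general d hde l m P hP
end

section
/- Let d ≥ 1 be odd and let P be the diagonal d×d phase-gate matrix with entries P|j⟩ = ω_d^{j(j−1)/2}|j⟩ for j ∈ {0, …, d−1} (the exponent j(j−1)/2 is an integer). Then for all integers l, m, conjugation by P acts on the operator basis as P · O_{l,m} · P† = O_{l, m−l+1}. -/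
open Complex Matrix Finset

/-- `ζ ^ n` for `ζ = e^{iπ/d}`, a `2d`-th root of unity. Every entry of `P` and of `O_{l,m}` is
such a power, so the theorem reduces to a congruence of exponents modulo `2d`. -/
noncomputable def zetaPow (d : ℕ) (n : ℤ) : ℂ := cexp (Real.pi * I * n / d)

theorem zetaPow_add (d : ℕ) (a b : ℤ) : zetaPow d (a + b) = zetaPow d a * zetaPow d b := by
  rw [zetaPow, zetaPow, zetaPow, ← Complex.exp_add]
  push_cast
  ring_nf

theorem star_zetaPow (d : ℕ) (n : ℤ) : star (zetaPow d n) = zetaPow d (-n) := by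
  rw [zetaPow, zetaPow, Complex.star_def, ← Complex.exp_conj]
  congr 1
  simp only [map_div₀, map_mul, Complex.conj_ofReal, Complex.conj_I, map_intCast, map_natCast]
  push_cast
  ring

theorem zetaPow_eq_of_dvd {d : ℕ} {a b : ℤ} (h : 2 * (d : ℤ) ∣ a - b) :
    zetaPow d a = zetaPow d b := by
  obtain ⟨c, hc⟩ := h
  rcases eq_or_ne d 0 with rfl | hd
  · simp [zetaPow]
  rw [zetaPow, zetaPow, Complex.exp_eq_exp_iff_exists_int]
  refine ⟨c, ?_⟩
  have hcC : (a : ℂ) - b = 2 * d * c := by exact_mod_cast hc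
  field_simp
  linear_combination hcC

theorem exp_choose_two_eq_zetaPow (d u : ℕ) :
    cexp (2 * Real.pi * I * ((u * (u - 1) / 2 : ℕ) : ℂ) / d) = zetaPow d (u * (u - 1)) := by
  rw [zetaPow, ← Nat.choose_two_right, Nat.cast_choose_two]
  push_cast
  ring_nf

theorem Omat_apply_s14 (d : ℕ) (l m : ℤ) (u x : Fin d) :
    Omat d l m u x =
      if (d : ℤ) ∣ ((u : ℕ) + (x : ℕ) - l) then zetaPow d (2 * m * (x : ℕ) - m * l) else 0 := by
  rw [Omat, of_apply, zetaPow, ← Complex.exp_add]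
  push_cast
  ring_nf

/-- On the support `u + x = l + d k` of `O_{l,m}`, the phase picked up under conjugation is
`u(u-1) - x(x-1) = d k (2l + dk - 1 - 2x) + l(l-1) - 2(l-1)x`; the last two terms are the change of
exponent from `m` to `m - l + 1`, and `k (dk - 1)` is even because `d` is odd. -/
theorem two_mul_dvd_conj_phase {d u x l m k : ℤ} (hd : Odd d) (h : u + x - l = d * k) :
    2 * d ∣ (u * (u - 1) + (2 * m * x - m * l) + -(x * (x - 1))) -
      (2 * (m - l + 1) * x - (m - l + 1) * l) := by
  obtain ⟨e, he⟩ := Int.even_mul_pred_self k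
  obtain ⟨f, hf⟩ := hd
  have hu : u = l + d * k - x := by linarith
  refine ⟨e + k * k * f + k * (l - x), ?_⟩
  subst hu hf
  linear_combination (2 * f + 1) * he

theorem Omat_phase_conj_odd_general (d : ℕ) (hdo : Odd d) (l m : ℤ)
    (P : Matrix (Fin d) (Fin d) ℂ)
    (hP : P = Matrix.of fun (u x : Fin d) =>
      if u = x then
        Complex.exp (2 * (Real.pi : ℂ) * Complex.I * (((u : ℕ) * ((u : ℕ) - 1) / 2 : ℕ) : ℂ) / d)
      else 0) :
    P * Omat d l m * Pᴴ = Omat d l (m - l + 1) := by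
  have hP_diagonal : P = diagonal fun u : Fin d => zetaPow d ((u : ℕ) * ((u : ℕ) - 1)) := by
    ext u x
    simp only [hP, of_apply, diagonal_apply, exp_choose_two_eq_zetaPow]
  ext u x
  rw [hP_diagonal, diagonal_conjTranspose, mul_diagonal, diagonal_mul, Omat_apply_s14, Omat_apply_s14]
  split_ifs with h
  · obtain ⟨k, hk⟩ := h
    rw [Pi.star_apply, star_zetaPow, ← zetaPow_add, ← zetaPow_add]
    exact zetaPow_eq_of_dvd (two_mul_dvd_conj_phase (by exact_mod_cast hdo) hk)
  · simp

/-- for odd `d ≥ 1`, conjugation by the phase gate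
`P|j⟩ = ω_d^{j(j-1)/2}|j⟩` acts as `P · O_{l,m} · P† = O_{l, m-l+1}`. -/
theorem Omat_phase_conj_odd (d : ℕ) (hd : 1 ≤ d) (hdo : Odd d) (l m : ℤ)
    (P : Matrix (Fin d) (Fin d) ℂ)
    (hP : P = Matrix.of fun (u x : Fin d) =>
      if u = x then
        Complex.exp (2 * (Real.pi : ℂ) * Complex.I * (((u : ℕ) * ((u : ℕ) - 1) / 2 : ℕ) : ℂ) / d)
      else 0) :
    P * Omat d l m * Pᴴ = Omat d l (m - l + 1) :=
  Omat_phase_conj_odd_general d hdo l m P hP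
end

section
/- Let d ≥ 1 be odd and let h = (d+1)/2, the multiplicative inverse of 2 modulo d. Define the Heisenberg–Weyl matrices P_d(b₁,b₂) = ω_d^{h·b₁b₂} X_d^{b₁} Z_d^{b₂}. Then for all integers a₁, a₂, the phase-space point operator coincides with the operator basis: O_{2a₁, −2a₂} = (1/d) Σ_{b₁=0}^{d−1} Σ_{b₂=0}^{d−1} ω_d^{a₁b₂ − a₂b₁} · P_d(b₁,b₂)†. -/
open Complex Matrix Finset

/-- The clock matrix `Z_d = Σ_j ω_d^j |j⟩⟨j|`. -/
noncomputable def Zmat (d : ℕ) : Matrix (Fin d) (Fin d) ℂ :=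
  Matrix.of fun u x =>
    if u = x then Complex.exp (2 * (Real.pi : ℂ) * Complex.I * ((u : ℕ) : ℂ) / d) else 0

/-- The shift matrix `X_d = Σ_j |(j+1) mod d⟩⟨j|`. -/
noncomputable def Xmat (d : ℕ) : Matrix (Fin d) (Fin d) ℂ :=
  Matrix.of fun u x =>
    if (d : ℤ) ∣ (((u : ℕ) : ℤ) - ((x : ℕ) : ℤ) - 1) then 1 else 0

/-- The Heisenberg–Weyl matrix `P_d(b₁,b₂) = ω_d^{h·b₁b₂} X_d^{b₁} Z_d^{b₂}`,
where `h` is an integer (for odd `d` one takes `h = (d+1)/2`, the inverse of 2 mod d). -/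
noncomputable def HWmat (d : ℕ) (h : ℕ) (b₁ b₂ : ℕ) : Matrix (Fin d) (Fin d) ℂ :=
  Complex.exp (2 * (Real.pi : ℂ) * Complex.I * (h : ℂ) * (b₁ : ℂ) * (b₂ : ℂ) / d) •
    (Xmat d ^ b₁ * Zmat d ^ b₂)

/-! Entrywise, `P(b₁,b₂)†` is supported on `b₁ ≡ x - u`, where it equals `ω^{-(h b₁ b₂ + b₂ u)}`.
In the `(u, x)` entry of the double sum only `b₁ ≡ x - u` survives, and the `b₂`-sum is the
character sum `Σ_{b₂} ω^{b₂ (a₁ - h (x - u) - u)}`, equal to `d` or `0`. Since `2h ≡ 1`, its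
support `a₁ - h (x - u) - u ≡ 0` is `u + x ≡ 2a₁`, the support of `O_{2a₁,-2a₂}`, and there the
remaining phases agree. Index arithmetic is done in `ZMod d`, with `ω^k = ZMod.stdAddChar k`. -/

open ZMod

section

variable {M : Type*} [AddCommMonoid M] {d : ℕ}

theorem Fin.natCast_zmod_eq_iff {u x : Fin d} : ((u : ℕ) : ZMod d) = x ↔ u = x := by
  rw [natCast_eq_natCast_iff', Nat.mod_eq_of_lt u.isLt, Nat.mod_eq_of_lt x.isLt, Fin.ext_iff]

theorem Xmat_apply (u x : Fin d) :
    Xmat d u x = if (u : ZMod d) = x + 1 then 1 else 0 := by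
  rw [Xmat, of_apply]
  refine if_congr ?_ rfl rfl
  rw [sub_sub, ← intCast_eq_intCast_iff_dvd_sub, eq_comm]
  push_cast
  rfl

variable [NeZero d]

theorem ZMod.sum_range_natCast (f : ZMod d → M) : ∑ b ∈ range d, f b = ∑ z, f z :=
  Finset.sum_nbij' (↑) val (by simp) (by simp [val_lt])
    (fun _ hb => val_cast_of_lt (mem_range.1 hb)) (fun z _ => natCast_zmod_val z) (fun _ _ => rfl)

theorem ZMod.sum_range_ite_natCast_eq (t : ZMod d) (c : M) :
    ∑ b ∈ range d, (if (b : ZMod d) = t then c else 0) = c := by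
  rw [sum_range_natCast fun z => if z = t then c else 0, sum_ite_eq']
  simp

theorem Fin.sum_ite_natCast_eq (t : ZMod d) (g : Fin d → M) :
    ∑ j : Fin d, (if ((j : ℕ) : ZMod d) = t then g j else 0) = g ⟨t.val, t.val_lt⟩ := by
  rw [Fintype.sum_eq_single ⟨t.val, t.val_lt⟩, if_pos (natCast_zmod_val t)]
  refine fun j hj => if_neg fun h => hj (Fin.natCast_zmod_eq_iff.1 ?_)
  rw [h, Fin.val_mk, natCast_zmod_val]

theorem ZMod.sum_range_stdAddChar_mul (c : ZMod d) :
    ∑ b ∈ range d, stdAddChar ((b : ZMod d) * c) = if c = 0 then (d : ℂ) else 0 := by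
  rw [sum_range_natCast fun z => stdAddChar (z * c),
    AddChar.sum_mulShift c (isPrimitive_stdAddChar d), ZMod.card]
  push_cast
  rfl

theorem Xmat_pow (b : ℕ) :
    Xmat d ^ b = of fun u x : Fin d => if (u : ZMod d) = x + b then 1 else 0 := by
  induction b with
  | zero =>
    ext u x
    simp only [pow_zero, one_apply, of_apply, Nat.cast_zero, add_zero, Fin.natCast_zmod_eq_iff]
  | succ b ih =>
    ext u x
    rw [pow_succ, ih, mul_apply]
    simp only [of_apply, Xmat_apply, mul_ite, mul_one, mul_zero]
    rw [Fin.sum_ite_natCast_eq]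
    simp only [natCast_zmod_val]
    push_cast
    rw [add_right_comm, add_assoc]

theorem Zmat_pow (b : ℕ) :
    Zmat d ^ b = diagonal fun u : Fin d => stdAddChar ((b : ZMod d) * ((u : ℕ) : ZMod d)) := by
  have : Zmat d = diagonal fun u : Fin d => stdAddChar ((u : ℕ) : ZMod d) := by
    ext u x
    simp only [Zmat, of_apply, diagonal_apply, stdAddChar_apply, toCircle_natCast]
  rw [this, diagonal_pow]
  congr 1
  ext u
  rw [Pi.pow_apply, ← AddChar.map_nsmul_eq_pow, nsmul_eq_mul]

theorem HWmat_apply (h b₁ b₂ : ℕ) (u x : Fin d) :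
    HWmat d h b₁ b₂ u x = if (u : ZMod d) = x + b₁
      then stdAddChar (h * b₁ * b₂ + b₂ * (x : ℕ) : ZMod d) else 0 := by
  have hphase : exp (2 * (Real.pi : ℂ) * I * (h : ℂ) * (b₁ : ℂ) * (b₂ : ℂ) / d) =
      stdAddChar (h * b₁ * b₂ : ZMod d) := by
    rw [← Nat.cast_mul, ← Nat.cast_mul, stdAddChar_apply, toCircle_natCast]
    push_cast
    ring_nf
  rw [HWmat, Zmat_pow, Xmat_pow, Matrix.smul_apply, mul_diagonal, of_apply, hphase, smul_eq_mul,
    ite_mul, one_mul, zero_mul, mul_ite, mul_zero, AddChar.map_add_eq_mul]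

theorem conjTranspose_HWmat_apply (h b₁ b₂ : ℕ) (u x : Fin d) :
    (HWmat d h b₁ b₂)ᴴ u x = if (x : ZMod d) = u + b₁
      then stdAddChar (-(h * b₁ * b₂ + b₂ * (u : ℕ)) : ZMod d) else 0 := by
  rw [conjTranspose_apply, HWmat_apply, AddChar.map_neg_eq_conj]
  split_ifs <;> simp

theorem sum_phase_smul_conjTranspose_HWmat_apply (h : ℕ) (a₁ a₂ : ℤ) (u x : Fin d) :
    (∑ b₁ ∈ range d, ∑ b₂ ∈ range d,
        exp (2 * (Real.pi : ℂ) * I * ((a₁ * b₂ - a₂ * b₁ : ℤ) : ℂ) / d) • (HWmat d h b₁ b₂)ᴴ) u x =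
      if (a₁ - h * ((x : ℕ) - (u : ℕ)) - (u : ℕ) : ZMod d) = 0
        then stdAddChar (-a₂ * ((x : ℕ) - (u : ℕ)) : ZMod d) * d else 0 := by
  -- Only `b₁ ≡ x - u` contributes, so `x - u` may replace `b₁` in the `b₂`-phase.
  have hterm : ∀ b₁ b₂ : ℕ,
      exp (2 * (Real.pi : ℂ) * I * ((a₁ * b₂ - a₂ * b₁ : ℤ) : ℂ) / d) * (HWmat d h b₁ b₂)ᴴ u x =
        (if (b₁ : ZMod d) = x - u then stdAddChar (-a₂ * ((x : ℕ) - (u : ℕ)) : ZMod d) else 0) *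
          stdAddChar (b₂ * (a₁ - h * ((x : ℕ) - (u : ℕ)) - (u : ℕ)) : ZMod d) := by
    intro b₁ b₂
    rw [conjTranspose_HWmat_apply, ← stdAddChar_coe]
    split_ifs with hx hb hb
    · rw [← AddChar.map_add_eq_mul, ← AddChar.map_add_eq_mul]
      congr 1
      push_cast
      linear_combination (-(a₂ : ZMod d) - h * b₂) * hb
    · exact absurd (by rw [hx]; ring) hb
    · exact absurd (by rw [hb]; ring) hx
    · rw [mul_zero, zero_mul]
  simp only [Matrix.sum_apply, Matrix.smul_apply, smul_eq_mul, hterm, ← mul_sum]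
  rw [sum_range_stdAddChar_mul, ← sum_mul, sum_range_ite_natCast_eq, mul_ite, mul_zero]

theorem Omat_two_mul_apply (l m : ℤ) (u x : Fin d) :
    Omat d (2 * l) m u x =
      if ((u : ℕ) + (x : ℕ) : ZMod d) = 2 * l
        then stdAddChar (m * ((x : ℕ) - l) : ZMod d) else 0 := by
  have hphase : exp (-((Real.pi : ℂ) * I * m * ((2 * l : ℤ) : ℂ)) / d) *
      exp (2 * (Real.pi : ℂ) * I * m * ((x : ℕ) : ℂ) / d) =
      exp (2 * (Real.pi : ℂ) * I * ((m * ((x : ℕ) - l) : ℤ) : ℂ) / d) := by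
    rw [← exp_add]
    congr 1
    push_cast
    ring
  rw [Omat, of_apply, hphase, ← stdAddChar_coe]
  refine if_congr ?_ (by push_cast; rfl) rfl
  rw [← intCast_eq_intCast_iff_dvd_sub, eq_comm]
  push_cast
  rfl

end

theorem ZMod.two_mul_odd_half_succ {d : ℕ} (hd : Odd d) : (2 : ZMod d) * ((d + 1) / 2 : ℕ) = 1 := by
  obtain ⟨k, rfl⟩ := hd
  rw [show (2 * k + 1 + 1) / 2 = k + 1 by omega]
  have := natCast_self (2 * k + 1)
  push_cast at this ⊢
  linear_combination this

/-- for odd `d` with `h = (d+1)/2` (the inverse of 2 mod d), the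
phase-space point operator coincides with the operator basis:
`O_{2a₁,-2a₂} = (1/d) Σ_{b₁,b₂=0}^{d-1} ω_d^{a₁b₂ - a₂b₁} · P_d(b₁,b₂)†`. -/
theorem Omat_phase_space_point (d : ℕ) (hd : 1 ≤ d) (hdo : Odd d) (a₁ a₂ : ℤ) :
    Omat d (2 * a₁) (-(2 * a₂)) =
      (1 / (d : ℂ)) • ∑ b₁ ∈ Finset.range d, ∑ b₂ ∈ Finset.range d,
        Complex.exp (2 * (Real.pi : ℂ) * Complex.I *
            ((a₁ * b₂ - a₂ * b₁ : ℤ) : ℂ) / d) • (HWmat d ((d + 1) / 2) b₁ b₂)ᴴ := by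
  have : NeZero d := ⟨by omega⟩
  ext u x
  rw [Omat_two_mul_apply, Matrix.smul_apply, sum_phase_smul_conjTranspose_HWmat_apply, smul_eq_mul]
  set h : ZMod d := (((d + 1) / 2 : ℕ) : ZMod d)
  set U : ZMod d := ((u : ℕ) : ZMod d)
  set X : ZMod d := ((x : ℕ) : ZMod d)
  have h2 : 2 * h = 1 := two_mul_odd_half_succ hdo
  have hcond : a₁ - h * (X - U) - U = 0 ↔ U + X = 2 * a₁ := by
    constructor <;> intro hE
    · linear_combination (-2) * hE - (X - U) * h2
    · linear_combination (-h) * hE - (a₁ - U) * h2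
  simp only [hcond, mul_ite, mul_zero]
  split_ifs with hUX
  · rw [one_div, inv_mul_eq_div, mul_div_cancel_right₀ _ (NeZero.ne (d : ℂ))]
    congr 1
    push_cast
    linear_combination -a₂ * hUX
  · rfl
end

section
/- Let d ≥ 2 be even. Then Σ_{l=0}^{d−1} Σ_{m=0}^{d−1} |Tr(O_{l,m})| = d²/2; consequently the maximally mixed state 𝟙_d/d satisfies Σ_{l,m=0}^{d−1} |d^{−1} Tr(O_{l,m} · 𝟙_d/d)| = 1/2 < 1, i.e., in even dimensions there exist (hyperpolyhedral) states whose 1-norm of the operator-basis coefficients lies strictly below the value 1 attained by pure stabilizer states. -/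
/-!
Write `d = 2e`. The diagonal entry `(x, x)` of `O_{l,m}` is nonzero only when `2x ≡ l (mod 2e)`,
and then it equals `exp(iπ m (2x - l)/d)`. For odd `l` there is no such `x`; for `l = 2k` there are
exactly two, `x = k` and `x = k + e`, with phases `1` and `(-1)^m`. Hence `|Tr O_{l,m}|` is `2`
when `l` and `m` are both even and `0` otherwise, and summing over the `e²` even pairs gives
`2e² = d²/2`.
Since `Tr(O · 𝟙/d) = Tr(O)/d`, the normalised sum is `(d²/2)/d² = 1/2`.
-/

open Complex Matrix Finset

theorem Omat_apply_self (d : ℕ) (l m : ℤ) (x : Fin d) :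
    Omat d l m x x =
      if (d : ℤ) ∣ 2 * (x : ℕ) - l then exp (m * (2 * (x : ℕ) - l) / d * (Real.pi * I))
      else 0 := by
  simp only [Omat, of_apply, ← two_mul]
  split_ifs
  · rw [← Complex.exp_add]
    ring_nf
  · rfl

theorem two_mul_dvd_two_mul_sub_two_mul_iff {e k x : ℕ} (hk : k < e) (hx : x < 2 * e) :
    ((2 * e : ℕ) : ℤ) ∣ 2 * x - 2 * k ↔ x = k ∨ x = k + e := by
  push_cast
  rw [← mul_sub, Int.mul_dvd_mul_iff_left two_ne_zero]
  constructor
  · intro h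
    rcases lt_or_ge x (k + e) with hlt | hge
    · left
      have := Int.eq_zero_of_abs_lt_dvd h (abs_lt.mpr ⟨by omega, by omega⟩)
      omega
    · right
      have := Int.eq_zero_of_dvd_of_nonneg_of_lt (m := (x : ℤ) - k - e) (n := e) (by omega)
        (by omega) (by simpa using (dvd_sub_self_right).mpr h)
      omega
  · rintro (rfl | rfl) <;> simp

theorem sum_range_two_mul_ite_even {M : Type*} [AddCommMonoid M] (e : ℕ) (a : M) :
    ∑ n ∈ range (2 * e), (if Even n then a else 0) = e • a := by
  induction e with
  | zero => simp
  | succ e ih =>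
    rw [mul_add_one, sum_range_succ, sum_range_succ, ih, succ_nsmul,
      if_pos (even_two_mul e), if_neg (Nat.not_even_two_mul_add_one e), add_zero]

theorem trace_Omat_two_mul (e l m : ℕ) (hl : l < 2 * e) :
    trace (Omat (2 * e) l m) = if Even l then 1 + (-1) ^ m else 0 := by
  rw [trace]
  simp only [Matrix.diag, Omat_apply_self, Int.cast_natCast]
  rw [Fin.sum_univ_eq_sum_range (fun x : ℕ => if ((2 * e : ℕ) : ℤ) ∣ 2 * (x : ℤ) - l then
      exp (m * (2 * x - l) / (2 * e : ℕ) * (Real.pi * I)) else 0), ← sum_filter]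
  split_ifs with hle
  · obtain ⟨k, rfl⟩ := even_iff_two_dvd.mp hle
    have hk : k < e := by omega
    have hsupp : (range (2 * e)).filter
        (fun x : ℕ => ((2 * e : ℕ) : ℤ) ∣ 2 * (x : ℤ) - ((2 * k : ℕ) : ℤ)) = {k, k + e} := by
      ext x
      simp only [mem_filter, mem_range, mem_insert, mem_singleton]
      constructor
      · rintro ⟨hx, h⟩
        exact (two_mul_dvd_two_mul_sub_two_mul_iff hk hx).mp (by exact_mod_cast h)
      · intro h
        have hx : x < 2 * e := by omega
        exact ⟨hx, by exact_mod_cast (two_mul_dvd_two_mul_sub_two_mul_iff hk hx).mpr h⟩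
    have he : (e : ℂ) ≠ 0 := by exact_mod_cast (by omega : e ≠ 0)
    rw [hsupp, sum_pair (by omega : k ≠ k + e)]
    push_cast
    rw [show (m : ℂ) * (2 * (k + e) - 2 * k) / (2 * e) * (Real.pi * I) = m * (Real.pi * I) by
      field_simp; ring, exp_nat_mul, exp_pi_mul_I]
    simp
  · obtain ⟨j, rfl⟩ := Nat.not_even_iff_odd.mp hle
    refine sum_eq_zero fun x hx => absurd (mem_filter.mp hx).2 fun h => ?_
    have h2 : (2 : ℤ) ∣ 2 * x - ((2 * j + 1 : ℕ) : ℤ) :=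
      (Dvd.intro (e : ℤ) (by push_cast; ring)).trans h
    omega

theorem norm_trace_Omat_two_mul (e l m : ℕ) (hl : l < 2 * e) :
    ‖trace (Omat (2 * e) l m)‖ = if Even l ∧ Even m then 2 else 0 := by
  rw [trace_Omat_two_mul e l m hl]
  by_cases hle : Even l <;> by_cases hme : Even m
  · simp [hle, hme, hme.neg_one_pow, one_add_one_eq_two]
  · simp [hle, hme, (Nat.not_even_iff_odd.mp hme).neg_one_pow]
  all_goals simp [hle]

theorem sum_sum_norm_trace_Omat_two_mul (e : ℕ) :
    ∑ l ∈ range (2 * e), ∑ m ∈ range (2 * e), ‖trace (Omat (2 * e) l m)‖ = 2 * e ^ 2 := by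
  rw [sum_congr rfl fun l hl => sum_congr rfl fun m _ =>
    norm_trace_Omat_two_mul e l m (mem_range.mp hl)]
  simp only [ite_and, sum_ite_irrel, sum_const_zero, sum_range_two_mul_ite_even, nsmul_eq_mul]
  ring

theorem trace_mul_smul_one {n R : Type*} [Fintype n] [DecidableEq n] [CommSemiring R]
    (A : Matrix n n R) (c : R) : trace (A * c • 1) = c * trace A := by
  rw [Matrix.mul_smul, mul_one, trace_smul, smul_eq_mul]

/-- for even `d ≥ 2`, `Σ_{l,m=0}^{d-1} |Tr(O_{l,m})| = d²/2`;
consequently the maximally mixed state `𝟙/d` satisfies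
`Σ_{l,m} |d⁻¹ Tr(O_{l,m} · 𝟙/d)| = 1/2 < 1`, i.e. in even dimensions there exist
(hyperpolyhedral) states whose operator-basis 1-norm lies strictly below the value `1`
attained by pure stabilizer states. -/
theorem Omat_hyperpolyhedral (d : ℕ) (hd : 2 ≤ d) (hde : Even d) :
    (∑ l ∈ Finset.range d, ∑ m ∈ Finset.range d,
      ‖Matrix.trace (Omat d l m)‖ = (d : ℝ) ^ 2 / 2) ∧
    (∑ l ∈ Finset.range d, ∑ m ∈ Finset.range d,
      ‖(1 / (d : ℂ)) * Matrix.trace (Omat d l m *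
        ((1 / (d : ℂ)) • (1 : Matrix (Fin d) (Fin d) ℂ)))‖ = 1 / 2) ∧
    (1 / 2 : ℝ) < 1 := by
  obtain ⟨e, rfl⟩ := even_iff_two_dvd.mp hde
  have hsum := sum_sum_norm_trace_Omat_two_mul e
  have he : (e : ℝ) ≠ 0 := by exact_mod_cast (by omega : e ≠ 0)
  refine ⟨by rw [hsum]; push_cast; ring, ?_, by norm_num⟩
  simp only [trace_mul_smul_one, ← mul_assoc, norm_mul, ← mul_sum, hsum, one_div, norm_inv,
    Complex.norm_natCast]
  push_cast
  field_simp
end
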